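/- Let N be a Poisson random variable with parameter θ > 0, i.e. P(N = n) = e^{−θ} θⁿ/n! for n ∈ ℕ. Then for every r > 0, P(N ≥ θ + r) ≤ ([θ+r]/r) · exp{ [θ+r] − θ − [θ+r] · log([θ+r]/θ) } / √(2π[θ+r]), where [R] = inf{ n ∈ ℕ, n ≥ 1 : n ≥ R } denotes the upper integer part of a positive real number R. -/

import Mathlib

open MeasureTheory ENNReal Set
open scoped Classical

noncomputable section

/-- The configuration space on `Λ`: locally finite subsets of `Λ`, identified with the
integer-valued Radon measures `ω = Σ_{x ∈ ω} ε_x`. -/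
def ConfigurationSpace (Λ : Type*) [TopologicalSpace Λ] : Type _ :=
  {s : Set Λ // ∀ K : Set Λ, IsCompact K → (s ∩ K).Finite}

namespace ConfigurationSpace

variable {Λ : Type*} [TopologicalSpace Λ]

/-- The vague topology on the configuration space: the weakest topology making
`ω ↦ ∫ f dω = Σ_{x ∈ ω} f x` continuous for every continuous compactly supported `f`. -/
instance : TopologicalSpace (ConfigurationSpace Λ) :=
  ⨆ f : {f : Λ → ℝ // Continuous f ∧ HasCompactSupport f},
    TopologicalSpace.induced
      (fun ω : ConfigurationSpace Λ => ∑' x : ω.1, f.1 (x : Λ)) inferInstance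

/-- The Borel σ-algebra of the vague topology. -/
instance : MeasurableSpace (ConfigurationSpace Λ) := borel _

/-- `ω + ε_x`, the configuration `ω` with the extra point `x`. -/
def addPoint (ω : ConfigurationSpace Λ) (x : Λ) : ConfigurationSpace Λ :=
  ⟨insert x ω.1, fun K hK =>
    Set.Finite.subset ((ω.2 K hK).insert x) (by
      rintro y ⟨hy, hyK⟩
      rcases Set.mem_insert_iff.mp hy with rfl | hmem
      · exact Set.mem_insert _ _
      · exact Set.mem_insert_of_mem _ ⟨hmem, hyK⟩)⟩

/-- The discrete (difference) gradient `∇♯_x F (ω) = F(ω + ε_x) - F(ω)`. -/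
def discreteGradient (F : ConfigurationSpace Λ → ℝ) (x : Λ) (ω : ConfigurationSpace Λ) : ℝ :=
  F (addPoint ω x) - F ω

/-- The trivial distance `ρ0` on the configuration space. -/
def rho0 (ω η : ConfigurationSpace Λ) : ℝ≥0∞ := if ω = η then 0 else 1

/-- The total variation distance `ρ1(ω,η) = Σ_{x∈Λ} |ω({x}) - η({x})|`,
with values in `[0,∞]`. -/
def rho1 (ω η : ConfigurationSpace Λ) : ℝ≥0∞ :=
  ((ω.1 \ η.1).encard : ℝ≥0∞) + ((η.1 \ ω.1).encard : ℝ≥0∞)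

/-- `μ` is the Poisson measure of intensity `σ`: the probability measure on the
configuration space characterized by its Laplace functional. -/
def IsPoissonMeasure [MeasurableSpace Λ] (σ : Measure Λ)
    (μ : Measure (ConfigurationSpace Λ)) : Prop :=
  IsProbabilityMeasure μ ∧
    ∀ f : Λ → ℝ, Continuous f → HasCompactSupport f →
      ∫ ω, Real.exp (∑' x : ω.1, f (x : Λ)) ∂μ = Real.exp (∫ x, (Real.exp (f x) - 1) ∂σ)

end ConfigurationSpace

/-- The Rubinstein (optimal transportation) distance associated with the cost `ρ`. -/
def rubinstein {C : Type*} [MeasurableSpace C] (ρ : C → C → ℝ≥0∞) (μ ν : Measure C) : ℝ≥0∞ :=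
  ⨅ (γ : Measure (C × C)) (_ : IsProbabilityMeasure γ) (_ : γ.map Prod.fst = μ)
    (_ : γ.map Prod.snd = ν), ∫⁻ p, ρ p.1 p.2 ∂γ

/-- The upper integer part `[R] = inf{n ∈ ℕ, n ≥ 1 : n ≥ R}` of a real number. -/
def upInt (R : ℝ) : ℕ := max 1 ⌈R⌉₊

end

/-!
With `K = [θ + r]`, the tail beyond `K` is dominated termwise by a geometric series:
`(K + j)! ≥ K! K^j` gives `P(N = K + j) ≤ P(N = K) (θ/K)^j`, hence
`P(N ≥ K) ≤ P(N = K) K/(K - θ) ≤ P(N = K) K/r`. Stirling's lower bound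
`n! ≥ √(2πn) (n/e)^n` turns `P(N = K)` into the stated exponential.
-/

open Real MeasureTheory
open scoped Nat

lemma upInt_eq_ceil {R : ℝ} (hR : 0 < R) : upInt R = ⌈R⌉₊ :=
  max_eq_right (Nat.one_le_ceil_iff.mpr hR)

lemma setOf_le_natCast_eq_Ici_ceil (R : ℝ) : {n : ℕ | R ≤ n} = Ici ⌈R⌉₊ := by
  ext n
  simp [Nat.ceil_le]

lemma poisson_weight_add_le_mul_pow {θ : ℝ} (hθ : 0 ≤ θ) {K : ℕ} (hK : 0 < K) (j : ℕ) :
    exp (-θ) * θ ^ (K + j) / (K + j)! ≤ exp (-θ) * θ ^ K / K ! * (θ / K) ^ j := by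
  have hfac : (K ! : ℝ) * (K : ℝ) ^ j ≤ (K + j)! := by
    exact_mod_cast (Nat.mul_le_mul_left _ (Nat.pow_le_pow_left K.le_succ j)).trans
      Nat.factorial_mul_pow_le_factorial
  calc exp (-θ) * θ ^ (K + j) / (K + j)!
      ≤ exp (-θ) * θ ^ (K + j) / (K ! * (K : ℝ) ^ j) := by gcongr
    _ = exp (-θ) * θ ^ K / K ! * (θ / K) ^ j := by
        rw [pow_add, div_pow]
        field_simp

lemma measure_Ici_le_of_poisson {θ : ℝ} (hθ : 0 ≤ θ) {P : Measure ℕ}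
    (hP : ∀ n : ℕ, P {n} = ENNReal.ofReal (exp (-θ) * θ ^ n / n !)) {K : ℕ}
    (hθK : θ < K) :
    P (Ici K) ≤ ENNReal.ofReal (exp (-θ) * θ ^ K / K ! * (K / (K - θ))) := by
  have hK : 0 < K := by exact_mod_cast hθ.trans_lt hθK
  have hq : θ / K < 1 := (div_lt_one (by positivity)).mpr hθK
  have hgeom : ∑' j : ℕ, (θ / K) ^ j = K / (K - θ) := by
    rw [tsum_geometric_of_lt_one (by positivity) hq, one_sub_div (by positivity), inv_div]
  have hIci : Ici K = ⋃ j : ℕ, {K + j} := by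
    ext n
    simp only [mem_Ici, Set.mem_iUnion, Set.mem_singleton_iff, eq_comm (a := n)]
    exact ⟨fun h => ⟨n - K, by omega⟩, fun ⟨j, hj⟩ => hj ▸ K.le_add_right j⟩
  calc P (Ici K) ≤ ∑' j : ℕ, P {K + j} := hIci ▸ measure_iUnion_le _
    _ ≤ ∑' j : ℕ, ENNReal.ofReal (exp (-θ) * θ ^ K / K ! * (θ / K) ^ j) := by
        simp only [hP]
        exact ENNReal.tsum_le_tsum fun j =>
          ENNReal.ofReal_le_ofReal (poisson_weight_add_le_mul_pow hθ hK j)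
    _ = ENNReal.ofReal (exp (-θ) * θ ^ K / K ! * (K / (K - θ))) := by
        rw [← ENNReal.ofReal_tsum_of_nonneg (fun j => by positivity)
          ((summable_geometric_of_lt_one (by positivity) hq).mul_left _), tsum_mul_left, hgeom]

lemma poisson_weight_le_stirling {θ : ℝ} (hθ : 0 < θ) {K : ℕ} (hK : 0 < K) :
    exp (-θ) * θ ^ K / K ! ≤ exp (K - θ - K * log (K / θ)) / √(2 * π * K) := by
  have hexp : exp (K - θ - K * log (K / θ)) = exp (-θ) * θ ^ K / (K / exp 1) ^ K := by
    have hlog : exp (K * log (K / θ)) = (K / θ) ^ K := by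
      rw [← Real.log_pow, exp_log (by positivity)]
    rw [exp_sub, exp_sub, hlog, exp_neg, div_pow, div_pow, ← exp_nat_mul, mul_one]
    field_simp
  rw [hexp, div_div]
  gcongr
  rw [mul_comm]
  exact Stirling.le_factorial_stirling K

open Real in
theorem poisson_tail_estimate_sharp_general (θ : ℝ) (hθ : 0 < θ) (P : Measure ℕ)
    (hP : ∀ n : ℕ, P {n} = ENNReal.ofReal (Real.exp (-θ) * θ ^ n / n.factorial))
    (r : ℝ) (hr : 0 < r) :
    P {n : ℕ | θ + r ≤ (n : ℝ)} ≤
      ENNReal.ofReal (((upInt (θ + r) : ℝ) / r) *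
        Real.exp ((upInt (θ + r) : ℝ) - θ - (upInt (θ + r) : ℝ) * Real.log ((upInt (θ + r) : ℝ) / θ)) /
          Real.sqrt (2 * Real.pi * (upInt (θ + r) : ℝ))) := by
  have hθr : 0 < θ + r := by positivity
  have hK : upInt (θ + r) = ⌈θ + r⌉₊ := upInt_eq_ceil hθr
  set K := upInt (θ + r)
  have hθrK : θ + r ≤ K := hK ▸ Nat.le_ceil _
  have hKpos : 0 < K := by exact_mod_cast hθr.trans_le hθrK
  rw [setOf_le_natCast_eq_Ici_ceil, ← hK]
  refine (measure_Ici_le_of_poisson hθ.le hP (by linarith)).trans (ENNReal.ofReal_le_ofReal ?_)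
  calc exp (-θ) * θ ^ K / K ! * (K / (K - θ))
      ≤ exp (K - θ - K * log (K / θ)) / √(2 * π * K) * (K / r) := by
        have hKθ : (K : ℝ) / (K - θ) ≤ K / r :=
          div_le_div_of_nonneg_left (Nat.cast_nonneg K) hr (by linarith)
        exact mul_le_mul (poisson_weight_le_stirling hθ hKpos) hKθ
          (div_nonneg (Nat.cast_nonneg K) (by linarith)) (by positivity)
    _ = K / r * exp (K - θ - K * log (K / θ)) / √(2 * π * K) := by ring

open Real in
/-- for `N` Poisson of parameter `θ > 0` and `r > 0`,
`P(N ≥ θ + r) ≤ ([θ+r]/r) · exp{[θ+r] - θ - [θ+r] log([θ+r]/θ)} / √(2π[θ+r])`. -/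
theorem poisson_tail_estimate_sharp (θ : ℝ) (hθ : 0 < θ) (P : Measure ℕ)
    [IsProbabilityMeasure P]
    (hP : ∀ n : ℕ, P {n} = ENNReal.ofReal (Real.exp (-θ) * θ ^ n / n.factorial))
    (r : ℝ) (hr : 0 < r) :
    P {n : ℕ | θ + r ≤ (n : ℝ)} ≤
      ENNReal.ofReal (((upInt (θ + r) : ℝ) / r) *
        Real.exp ((upInt (θ + r) : ℝ) - θ - (upInt (θ + r) : ℝ) * Real.log ((upInt (θ + r) : ℝ) / θ)) /
          Real.sqrt (2 * Real.pi * (upInt (θ + r) : ℝ))) :=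
  poisson_tail_estimate_sharp_general θ hθ P hP r hr
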